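/- In the construction L(M) of Algorithm 1 from a strictly serializable strongly progressive TM M, every process incurs only O(1) RMRs in the cache-coherent (CC) model per execution of the Entry and Exit operations, apart from the RMRs incurred by the operations of M itself: in particular, while a process p_i spins on the register Lock[p_i][p_j] (where p_j is p_i's predecessor), p_i's cached copy of Lock[p_i][p_j] can be invalidated only by the single write of p_j in its Exit operation, after which p_i exits the loop, so the spin loop incurs O(1) RMRs. -/
import Mathlib


/-!
A formal model of the mutual exclusion implementation `L(M)` (Algorithm 1 of
Kuznetsov & Ravi, "Progressive Transactional Memory in Time and Space"), built
from a strictly serializable, strongly progressive TM implementation `M` that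
accesses the single t-object `X`.

Since `M` is strictly serializable and strongly progressive and every
transaction of `L(M)` accesses only the single t-object `X`, each committed
transaction of `M` takes effect as one atomic step that reads the previous
value of `X` and writes the identity `[p_i, face_i]` to `X`, whereas an aborted
transaction has no effect (the process retries the while loop).  The model
below represents this: the step `transSuccess` is a committed transaction of
the TM `M` (returning the previous value of `X`) and `transAbort` is an aborted
one.  Everything else of Algorithm 1 (the registers `Done`, `Succ`, `Lock` and
the control flow of the `Entry` and `Exit` operations) is modelled faithfully,
one line per step.

A process is *in the critical section* when its Enter operation has returned
`ok` and it has not yet invoked Exit, i.e., its program counter is `crit`.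
-/

/-- Program locations of a process executing Algorithm 1. -/
inductive Loc : Type where
  | idle        -- outside Entry/Exit (remainder section)
  | entry1      -- about to write Done[p, face] := false
  | entry2      -- about to write Succ[p, face] := ⊥
  | trans       -- in the while loop executing the transaction func() on M
  | lockPred    -- about to write Lock[p][prev.pid] := locked
  | setSucc     -- about to write Succ[prev] := p
  | checkDone   -- about to read Done[prev]
  | spin        -- spinning on Lock[p][prev.pid]
  | crit        -- in the critical section (Enter returned ok)
  | exit1       -- Exit invoked; about to write Done[p, face] := true
  | exit2       -- about to write Lock[Succ[p, face]][p] := unlocked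
deriving DecidableEq

/-- A configuration of `L(M)` for `n` processes: the control state and local
variables of each process, and the values of the shared objects (`X`, `Done`,
`Succ`, `Lock`).  `lock p q = true` means the register `Lock[p][q]` is
`locked`. -/
structure Conf (n : ℕ) where
  pc : Fin n → Loc
  face : Fin n → Bool
  prev : Fin n → Option (Fin n × Bool)
  X : Option (Fin n × Bool)
  done : Fin n → Bool → Bool
  succ : Fin n → Bool → Option (Fin n)
  lock : Fin n → Fin n → Bool

/-- The initial configuration. -/
def initConf (n : ℕ) : Conf n :=
  { pc := fun _ => Loc.idle
    face := fun _ => false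
    prev := fun _ => none
    X := none
    done := fun _ _ => false
    succ := fun _ _ => none
    lock := fun _ _ => false }

/-- One step of process `p` in `L(M)`. -/
inductive MStep (n : ℕ) : Fin n → Conf n → Conf n → Prop where
  /-- `p` invokes Enter: it adopts a new identity `face_p := 1 − face_p`. -/
  | invokeEnter (c : Conf n) (p : Fin n) :
      c.pc p = Loc.idle →
      MStep n p c { c with pc := Function.update c.pc p Loc.entry1,
                           face := Function.update c.face p (!c.face p) }
  /-- no-op step of an idle process (remainder section). -/
  | idleSkip (c : Conf n) (p : Fin n) :
      c.pc p = Loc.idle → MStep n p c c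
  /-- Entry line 2: `Done[p, face_p].write(false)`. -/
  | doneWrite (c : Conf n) (p : Fin n) :
      c.pc p = Loc.entry1 →
      MStep n p c { c with pc := Function.update c.pc p Loc.entry2,
                           done := Function.update c.done p
                             (Function.update (c.done p) (c.face p) false) }
  /-- Entry line 3: `Succ[p, face_p].write(⊥)`. -/
  | succInit (c : Conf n) (p : Fin n) :
      c.pc p = Loc.entry2 →
      MStep n p c { c with pc := Function.update c.pc p Loc.trans,
                           succ := Function.update c.succ p
                             (Function.update (c.succ p) (c.face p) none) }
  /-- The transaction `func()` on `M` aborts (returns `false`); `p` retries. -/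
  | transAbort (c : Conf n) (p : Fin n) :
      c.pc p = Loc.trans → MStep n p c c
  /-- The transaction `func()` on `M` commits: atomically `prev_p := X;
  X := [p, face_p]`.  If `prev_p = ⊥`, `p` enters the critical section. -/
  | transSuccess (c : Conf n) (p : Fin n) :
      c.pc p = Loc.trans →
      MStep n p c { c with
        pc := Function.update c.pc p (if c.X = none then Loc.crit else Loc.lockPred),
        prev := Function.update c.prev p c.X,
        X := some (p, c.face p) }
  /-- `Lock[p][prev.pid].write(locked)`. -/
  | lockWrite (c : Conf n) (p q : Fin n) (f : Bool) :
      c.pc p = Loc.lockPred → c.prev p = some (q, f) →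
      MStep n p c { c with pc := Function.update c.pc p Loc.setSucc,
                           lock := Function.update c.lock p
                             (Function.update (c.lock p) q true) }
  /-- `Succ[prev].write(p)`. -/
  | succWrite (c : Conf n) (p q : Fin n) (f : Bool) :
      c.pc p = Loc.setSucc → c.prev p = some (q, f) →
      MStep n p c { c with pc := Function.update c.pc p Loc.checkDone,
                           succ := Function.update c.succ q
                             (Function.update (c.succ q) f (some p)) }
  /-- read `Done[prev] = true`: `p` enters the critical section. -/
  | doneCheckTrue (c : Conf n) (p q : Fin n) (f : Bool) :
      c.pc p = Loc.checkDone → c.prev p = some (q, f) → c.done q f = true →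
      MStep n p c { c with pc := Function.update c.pc p Loc.crit }
  /-- read `Done[prev] = false`: `p` spins on `Lock[p][prev.pid]`. -/
  | doneCheckFalse (c : Conf n) (p q : Fin n) (f : Bool) :
      c.pc p = Loc.checkDone → c.prev p = some (q, f) → c.done q f = false →
      MStep n p c { c with pc := Function.update c.pc p Loc.spin }
  /-- spin: `Lock[p][prev.pid]` is still `locked`. -/
  | spinLocked (c : Conf n) (p q : Fin n) (f : Bool) :
      c.pc p = Loc.spin → c.prev p = some (q, f) → c.lock p q = true →
      MStep n p c c
  /-- spin: `Lock[p][prev.pid]` is `unlocked`; `p` enters the critical section. -/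
  | spinUnlocked (c : Conf n) (p q : Fin n) (f : Bool) :
      c.pc p = Loc.spin → c.prev p = some (q, f) → c.lock p q = false →
      MStep n p c { c with pc := Function.update c.pc p Loc.crit }
  /-- no-op step of a process inside the critical section. -/
  | critSkip (c : Conf n) (p : Fin n) :
      c.pc p = Loc.crit → MStep n p c c
  /-- `p` invokes Exit. -/
  | invokeExit (c : Conf n) (p : Fin n) :
      c.pc p = Loc.crit →
      MStep n p c { c with pc := Function.update c.pc p Loc.exit1 }
  /-- Exit line 1: `Done[p, face_p].write(true)`. -/
  | exitDone (c : Conf n) (p : Fin n) :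
      c.pc p = Loc.exit1 →
      MStep n p c { c with pc := Function.update c.pc p Loc.exit2,
                           done := Function.update c.done p
                             (Function.update (c.done p) (c.face p) true) }
  /-- Exit line 2: `Lock[Succ[p, face_p]][p].write(unlocked)`; Exit returns. -/
  | exitUnlockSome (c : Conf n) (p q : Fin n) :
      c.pc p = Loc.exit2 → c.succ p (c.face p) = some q →
      MStep n p c { c with pc := Function.update c.pc p Loc.idle,
                           lock := Function.update c.lock q
                             (Function.update (c.lock q) p false) }
  /-- Exit line 2 with no registered successor; Exit returns. -/
  | exitUnlockNone (c : Conf n) (p : Fin n) :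
      c.pc p = Loc.exit2 → c.succ p (c.face p) = none →
      MStep n p c { c with pc := Function.update c.pc p Loc.idle }

/-- Configurations reachable in some execution of `L(M)`. -/
def Reachable (n : ℕ) (c : Conf n) : Prop :=
  Relation.ReflTransGen (fun a b => ∃ p, MStep n p a b) (initConf n) c

/-- Process `p` is in the critical section: its Enter has returned `ok` and it
has not invoked Exit. -/
def inCS {n : ℕ} (c : Conf n) (p : Fin n) : Prop := c.pc p = Loc.crit

/-- An infinite execution of `L(M)`: at time `i` the scheduled process
`sched i` takes one step. -/
structure MRun (n : ℕ) where
  conf : ℕ → Conf n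
  sched : ℕ → Fin n
  start : conf 0 = initConf n
  steps : ∀ i, MStep n (sched i) (conf i) (conf (i + 1))

/-- Every process takes infinitely many steps in `R`. -/
def fairRun {n : ℕ} (R : MRun n) : Prop :=
  ∀ p : Fin n, ∀ i, ∃ j, i ≤ j ∧ R.sched j = p

/-- Process `p` invokes Enter at time `i` of the run `R`. -/
def enterInvokedAt {n : ℕ} (R : MRun n) (i : ℕ) (p : Fin n) : Prop :=
  R.sched i = p ∧ (R.conf i).pc p = Loc.idle ∧ (R.conf (i + 1)).pc p = Loc.entry1

/-- At time `i` the transaction `func()` of the scheduled process commits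
(returns the previous value of `X` rather than aborting), terminating its
while loop. -/
def transSuccessAt {n : ℕ} (R : MRun n) (i : ℕ) : Prop :=
  (R.conf i).pc (R.sched i) = Loc.trans ∧
  (R.conf (i + 1)).pc (R.sched i) ≠ Loc.trans

/-- Formal counterpart, at the level of `L(M)`, of the hypothesis that the TM
`M` is strongly progressive: whenever some process is executing the transaction
`func()` on the single t-object `X`, not all the concurrent transactions abort,
i.e., some process's transaction eventually commits. -/
def stronglyProgressiveRun {n : ℕ} (R : MRun n) : Prop :=
  ∀ i, (∃ p, (R.conf i).pc p = Loc.trans) → ∃ j, i ≤ j ∧ transSuccessAt R j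

/-! ### Register-level accesses of the steps of Algorithm 1, for RMR accounting.

Each step of `L(M)` is annotated with the list of shared registers it accesses
(and whether the access is a read or a write).  The steps implementing the
transaction `func()` on the TM `M` (`transAbort`/`transSuccess`) carry no
register accesses here: their memory accesses belong to `M` and their RMR cost
is accounted to `M` ("apart from the RMRs incurred by the operations of `M`
itself"). -/

/-- The shared registers of `L(M)`: the t-object `X` (implemented by `M`) and
the registers `Done[p,f]`, `Succ[p,f]`, `Lock[p][q]`. -/
inductive Reg (n : ℕ) : Type where
  | X : Reg n
  | doneR : Fin n → Bool → Reg n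
  | succR : Fin n → Bool → Reg n
  | lockR : Fin n → Fin n → Reg n
deriving DecidableEq

/-- A register access: a read or a write of a register. -/
inductive RAcc (n : ℕ) : Type where
  | rd : Reg n → RAcc n
  | wr : Reg n → RAcc n
deriving DecidableEq

def RAcc.reg {n : ℕ} : RAcc n → Reg n
  | .rd r => r
  | .wr r => r

/-- One step of process `p`, annotated with its register accesses. -/
inductive AStep (n : ℕ) : Fin n → List (RAcc n) → Conf n → Conf n → Prop where
  | invokeEnter (c : Conf n) (p : Fin n) :
      c.pc p = Loc.idle →
      AStep n p [] c { c with pc := Function.update c.pc p Loc.entry1,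
                              face := Function.update c.face p (!c.face p) }
  | idleSkip (c : Conf n) (p : Fin n) :
      c.pc p = Loc.idle → AStep n p [] c c
  | doneWrite (c : Conf n) (p : Fin n) :
      c.pc p = Loc.entry1 →
      AStep n p [RAcc.wr (Reg.doneR p (c.face p))] c
        { c with pc := Function.update c.pc p Loc.entry2,
                 done := Function.update c.done p
                   (Function.update (c.done p) (c.face p) false) }
  | succInit (c : Conf n) (p : Fin n) :
      c.pc p = Loc.entry2 →
      AStep n p [RAcc.wr (Reg.succR p (c.face p))] c
        { c with pc := Function.update c.pc p Loc.trans,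
                 succ := Function.update c.succ p
                   (Function.update (c.succ p) (c.face p) none) }
  /-- aborted transaction of `M`; its accesses are accounted to `M`. -/
  | transAbort (c : Conf n) (p : Fin n) :
      c.pc p = Loc.trans → AStep n p [] c c
  /-- committed transaction of `M`; its accesses are accounted to `M`. -/
  | transSuccess (c : Conf n) (p : Fin n) :
      c.pc p = Loc.trans →
      AStep n p [] c { c with
        pc := Function.update c.pc p (if c.X = none then Loc.crit else Loc.lockPred),
        prev := Function.update c.prev p c.X,
        X := some (p, c.face p) }
  | lockWrite (c : Conf n) (p q : Fin n) (f : Bool) :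
      c.pc p = Loc.lockPred → c.prev p = some (q, f) →
      AStep n p [RAcc.wr (Reg.lockR p q)] c
        { c with pc := Function.update c.pc p Loc.setSucc,
                 lock := Function.update c.lock p
                   (Function.update (c.lock p) q true) }
  | succWrite (c : Conf n) (p q : Fin n) (f : Bool) :
      c.pc p = Loc.setSucc → c.prev p = some (q, f) →
      AStep n p [RAcc.wr (Reg.succR q f)] c
        { c with pc := Function.update c.pc p Loc.checkDone,
                 succ := Function.update c.succ q
                   (Function.update (c.succ q) f (some p)) }
  | doneCheckTrue (c : Conf n) (p q : Fin n) (f : Bool) :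
      c.pc p = Loc.checkDone → c.prev p = some (q, f) → c.done q f = true →
      AStep n p [RAcc.rd (Reg.doneR q f)] c
        { c with pc := Function.update c.pc p Loc.crit }
  | doneCheckFalse (c : Conf n) (p q : Fin n) (f : Bool) :
      c.pc p = Loc.checkDone → c.prev p = some (q, f) → c.done q f = false →
      AStep n p [RAcc.rd (Reg.doneR q f)] c
        { c with pc := Function.update c.pc p Loc.spin }
  | spinLocked (c : Conf n) (p q : Fin n) (f : Bool) :
      c.pc p = Loc.spin → c.prev p = some (q, f) → c.lock p q = true →
      AStep n p [RAcc.rd (Reg.lockR p q)] c c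
  | spinUnlocked (c : Conf n) (p q : Fin n) (f : Bool) :
      c.pc p = Loc.spin → c.prev p = some (q, f) → c.lock p q = false →
      AStep n p [RAcc.rd (Reg.lockR p q)] c
        { c with pc := Function.update c.pc p Loc.crit }
  | critSkip (c : Conf n) (p : Fin n) :
      c.pc p = Loc.crit → AStep n p [] c c
  | invokeExit (c : Conf n) (p : Fin n) :
      c.pc p = Loc.crit →
      AStep n p [] c { c with pc := Function.update c.pc p Loc.exit1 }
  | exitDone (c : Conf n) (p : Fin n) :
      c.pc p = Loc.exit1 →
      AStep n p [RAcc.wr (Reg.doneR p (c.face p))] c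
        { c with pc := Function.update c.pc p Loc.exit2,
                 done := Function.update c.done p
                   (Function.update (c.done p) (c.face p) true) }
  | exitUnlockSome (c : Conf n) (p q : Fin n) :
      c.pc p = Loc.exit2 → c.succ p (c.face p) = some q →
      AStep n p [RAcc.rd (Reg.succR p (c.face p)), RAcc.wr (Reg.lockR q p)] c
        { c with pc := Function.update c.pc p Loc.idle,
                 lock := Function.update c.lock q
                   (Function.update (c.lock q) p false) }
  | exitUnlockNone (c : Conf n) (p : Fin n) :
      c.pc p = Loc.exit2 → c.succ p (c.face p) = none →
      AStep n p [RAcc.rd (Reg.succR p (c.face p))] c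
        { c with pc := Function.update c.pc p Loc.idle }

/-- An infinite execution of `L(M)` with register-access annotations. -/
structure ARun (n : ℕ) where
  conf : ℕ → Conf n
  sched : ℕ → Fin n
  acc : ℕ → List (RAcc n)
  start : conf 0 = initConf n
  steps : ∀ i, AStep n (sched i) (acc i) (conf i) (conf (i + 1))

/-- Times `i ≤ t ≤ j` span one execution of the Entry operation followed by the
matching Exit operation of process `p`: at time `i` process `p` invokes Enter,
`p` is not back in its remainder section strictly inside the interval, and
after the step at time `j` the Exit operation has returned. -/
def entryExitInterval {n : ℕ} (R : ARun n) (p : Fin n) (i j : ℕ) : Prop :=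
  R.sched i = p ∧ (R.conf i).pc p = Loc.idle ∧ (R.conf (i + 1)).pc p = Loc.entry1 ∧
  (∀ t, i < t → t ≤ j → (R.conf t).pc p ≠ Loc.idle) ∧
  (R.conf (j + 1)).pc p = Loc.idle

/-! ### The cache-coherent (CC) model (write-through protocol).

Each process keeps cached copies of the registers: `cache q r = true` iff
process `q` holds a valid (non-invalidated) cached copy of register `r`.
A read of `r` by `p` is an RMR iff `p` has no valid cached copy (afterwards it
has one); a write of `r` by `p` is an RMR that invalidates all other cached
copies of `r`. -/

def ccApplyAcc {n : ℕ} (p : Fin n) (cache : Fin n → Reg n → Bool) :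
    RAcc n → (Fin n → Reg n → Bool)
  | .rd r => fun q r' => if r' = r ∧ q = p then true else cache q r'
  | .wr r => fun q r' => if r' = r then decide (q = p) else cache q r'

def ccApplyAccs {n : ℕ} (p : Fin n) :
    List (RAcc n) → (Fin n → Reg n → Bool) → (Fin n → Reg n → Bool)
  | [], cache => cache
  | a :: rest, cache => ccApplyAccs p rest (ccApplyAcc p cache a)

/-- Cache contents before the step at time `i` of the run `R` (initially no
process holds any valid cached copy). -/
def ccCache {n : ℕ} (R : ARun n) : ℕ → (Fin n → Reg n → Bool)
  | 0 => fun _ _ => false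
  | i + 1 => ccApplyAccs (R.sched i) (R.acc i) (ccCache R i)

/-- CC RMR cost of a single access by process `p` given cache contents. -/
def ccAccCost {n : ℕ} (p : Fin n) (cache : Fin n → Reg n → Bool) : RAcc n → ℕ
  | .rd r => if cache p r then 0 else 1
  | .wr _ => 1

/-- CC RMR cost of the step taken at time `i` of the run `R`. -/
def ccStepCost {n : ℕ} (R : ARun n) (i : ℕ) : ℕ :=
  ((R.acc i).map (ccAccCost (R.sched i) (ccCache R i))).sum


/-! ### Auxiliary lemmas -/

section Aux

variable {n : ℕ}

/-- Linear order of program locations along the Entry/Exit control flow. -/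
def lord : Loc → ℕ
  | .idle => 0
  | .entry1 => 1
  | .entry2 => 2
  | .trans => 3
  | .lockPred => 4
  | .setSucc => 5
  | .checkDone => 6
  | .spin => 7
  | .crit => 8
  | .exit1 => 9
  | .exit2 => 10

lemma lord_eq_spin {l : Loc} (h : lord l = lord Loc.spin) : l = Loc.spin := by
  cases l <;> simp [lord] at h ⊢

/-- Steps of other processes do not change `p`'s program counter. -/
lemma AStep.pc_other {s p : Fin n} {a : List (RAcc n)} {c c' : Conf n}
    (h : AStep n s a c c') (hps : s ≠ p) : c'.pc p = c.pc p := by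
  cases h <;> simp [Function.update_of_ne (Ne.symm hps)]

/-- A step of `p` that does not end in `idle` does not decrease `lord`. -/
lemma AStep.lord_le {p : Fin n} {a : List (RAcc n)} {c c' : Conf n}
    (h : AStep n p a c c') (h5 : c'.pc p ≠ Loc.idle) :
    lord (c.pc p) ≤ lord (c'.pc p) := by
  cases h
  case transSuccess h1 =>
    cases hX : c.X <;> simp_all [lord, Function.update_self]
  all_goals simp_all [lord, Function.update_self]

/-- A step of `p` at a location other than `idle`, `trans`, `crit`, `spin`
that does not end in `idle` strictly increases `lord`. -/
lemma AStep.lord_lt {p : Fin n} {a : List (RAcc n)} {c c' : Conf n}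
    (h : AStep n p a c c')
    (h2 : c.pc p ≠ Loc.trans) (h3 : c.pc p ≠ Loc.crit) (h4 : c.pc p ≠ Loc.spin)
    (h5 : c'.pc p ≠ Loc.idle) (h1 : c.pc p ≠ Loc.idle) :
    lord (c.pc p) < lord (c'.pc p) := by
  cases h
  all_goals simp_all [lord, Function.update_self]

lemma run_mono (R : ARun n) (p : Fin n) :
    ∀ a b : ℕ, a ≤ b → (∀ u, a < u → u ≤ b → (R.conf u).pc p ≠ Loc.idle) →
      lord ((R.conf a).pc p) ≤ lord ((R.conf b).pc p) := by
  intro a b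
  induction b with
  | zero =>
    intro h _
    have : a = 0 := Nat.le_zero.mp h
    simp [this]
  | succ b ih =>
    intro hab hni
    rcases Nat.eq_or_lt_of_le hab with h | h
    · simp [h]
    · have h1 : a ≤ b := by omega
      have h2 := ih h1 (fun u hu1 hu2 => hni u hu1 (by omega))
      have hstep := R.steps b
      have h3 : lord ((R.conf b).pc p) ≤ lord ((R.conf (b + 1)).pc p) := by
        by_cases hs : R.sched b = p
        · exact AStep.lord_le (hs ▸ hstep) (hni (b + 1) (by omega) le_rfl)
        · rw [AStep.pc_other hstep hs]
      omega

/-- A step with a nonempty access list starts at one of the accessing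
locations. -/
lemma AStep.cost_loc {s : Fin n} {a : List (RAcc n)} {c c' : Conf n}
    (h : AStep n s a c c') (ha : a ≠ []) :
    c.pc s ≠ Loc.idle ∧ c.pc s ≠ Loc.trans ∧ c.pc s ≠ Loc.crit := by
  cases h <;> simp_all

/-- Every step accesses at most two registers, hence costs at most `2`. -/
lemma AStep.cost_le_two {s : Fin n} {a : List (RAcc n)} {c c' : Conf n}
    (h : AStep n s a c c') (cache : Fin n → Reg n → Bool) :
    (a.map (ccAccCost s cache)).sum ≤ 2 := by
  cases h <;>
    simp only [List.map, List.sum_cons, List.sum_nil, ccAccCost] <;>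
    (try split_ifs) <;> omega

/-- Inversion of a step of `p` at location `spin`. -/
lemma AStep.spin_inv {p : Fin n} {a : List (RAcc n)} {c c' : Conf n}
    (h : AStep n p a c c') (hp : c.pc p = Loc.spin) :
    ∃ q f, c.prev p = some (q, f) ∧ a = [RAcc.rd (Reg.lockR p q)] ∧
      ((c.lock p q = true ∧ c' = c) ∨ (c.lock p q = false ∧ c'.pc p = Loc.crit)) := by
  cases h
  case spinLocked =>
    rename_i q f h1 h2 h3
    exact ⟨q, f, h2, rfl, Or.inl ⟨h3, rfl⟩⟩
  case spinUnlocked =>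
    rename_i q f h1 h2 h3
    exact ⟨q, f, h2, rfl, Or.inr ⟨h3, by simp [Function.update_self]⟩⟩
  all_goals simp_all

/-- While `p` is spinning, no step changes `p`'s local variable `prev`. -/
lemma AStep.prev_spin {s p : Fin n} {a : List (RAcc n)} {c c' : Conf n}
    (h : AStep n s a c c') (hp : c.pc p = Loc.spin) : c'.prev p = c.prev p := by
  cases h
  case transSuccess =>
    rename_i h1
    have hs : s ≠ p := by rintro rfl; rw [hp] at h1; cases h1
    simp [Function.update_of_ne (Ne.symm hs)]
  all_goals rfl

/-- Key invariant transfer: while `p` is spinning, after any step either `p`'s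
cached copy of `Lock[p][q]` is still valid, or `Lock[p][q]` holds `unlocked`
(the only invalidating write is the unlocking write of the predecessor). -/
lemma AStep.spin_invariant {s p q : Fin n} {a : List (RAcc n)} {c c' : Conf n}
    (cache : Fin n → Reg n → Bool)
    (h : AStep n s a c c') (hp : c.pc p = Loc.spin)
    (hI : cache p (Reg.lockR p q) = true ∨ c.lock p q = false) :
    ccApplyAccs s a cache p (Reg.lockR p q) = true ∨ c'.lock p q = false := by
  cases h
  case lockWrite =>
    rename_i q'' f h1 h2
    have hs : s ≠ p := by rintro rfl; rw [hp] at h1; cases h1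
    rcases hI with h | h
    · left; simp [ccApplyAccs, ccApplyAcc, h, Ne.symm hs]
    · right
      show (Function.update c.lock s _) p q = false
      rw [Function.update_of_ne (Ne.symm hs)]; exact h
  case exitUnlockSome =>
    rename_i q' h1 h2
    by_cases hq : q' = p ∧ s = q
    · obtain ⟨hq1, hq2⟩ := hq
      right
      show (Function.update c.lock q' (Function.update (c.lock q') s false)) p q = false
      rw [hq1, hq2, Function.update_self, Function.update_self]
    · rcases hI with h | h
      · left
        have hcond : (Reg.lockR p q : Reg n) ≠ Reg.lockR q' s := by
          intro hh
          rw [Reg.lockR.injEq] at hh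
          exact hq ⟨hh.1.symm, hh.2.symm⟩
        simp [ccApplyAccs, ccApplyAcc, h, hcond]
      · right
        show (Function.update c.lock q' _) p q = false
        by_cases hq' : q' = p
        · subst hq'
          have hsq : s ≠ q := fun hh => hq ⟨rfl, hh⟩
          rw [Function.update_self, Function.update_of_ne (Ne.symm hsq)]; exact h
        · rw [Function.update_of_ne (fun hh => hq' hh.symm)]; exact h
  all_goals
    rcases hI with h | h
    · left; simp [ccApplyAccs, ccApplyAcc, h]
    · right; exact h

end Aux
/-!
STATEMENT 10.
In the construction `L(M)` of Algorithm 1 from a strictly serializable strongly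
progressive TM `M`, every process incurs only `O(1)` RMRs in the CC model per
execution of the Entry and Exit operations, apart from the RMRs incurred by the
operations of `M` itself: in particular, while a process `p` spins on the
register `Lock[p][q]` (where `q` is `p`'s predecessor), `p`'s cached copy of
`Lock[p][q]` can be invalidated only by the single write of `q` in its Exit
operation, after which `p` exits the loop, so the spin loop incurs `O(1)` (in
fact at most `2`) RMRs.
-/
theorem LM_cc_constant_rmr :
    ∃ c : ℕ, ∀ (n : ℕ) (R : ARun n) (p : Fin n) (i j : ℕ),
      entryExitInterval R p i j →
      -- O(1) RMRs per Entry+Exit, apart from the RMRs of the operations of M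
      (∑ t ∈ Finset.Icc i j, if R.sched t = p then ccStepCost R t else 0) ≤ c ∧
      -- the spin loop itself incurs at most 2 RMRs
      (∑ t ∈ Finset.Icc i j,
        if R.sched t = p ∧ (R.conf t).pc p = Loc.spin then ccStepCost R t else 0) ≤ 2 := by
  refine ⟨18, ?_⟩
  intro n R p i j hij
  obtain ⟨hsi, hpci, hpci1, hni, hpcj1⟩ := hij
  -- monotonicity of the control location within the interval
  have within : ∀ a b : ℕ, i ≤ a → a ≤ b → b ≤ j →
      lord ((R.conf a).pc p) ≤ lord ((R.conf b).pc p) := by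
    intro a b ha hab hb
    exact run_mono R p a b hab (fun u h1 h2 => hni u (by omega) (by omega))
  classical
  set S1 := (Finset.Icc i j).filter
      (fun t => R.sched t = p ∧ ccStepCost R t ≠ 0 ∧ (R.conf t).pc p = Loc.spin) with hS1def
  set S2 := (Finset.Icc i j).filter
      (fun t => R.sched t = p ∧ ccStepCost R t ≠ 0 ∧ (R.conf t).pc p ≠ Loc.spin) with hS2def
  have memS1 : ∀ t ∈ S1, i ≤ t ∧ t ≤ j ∧ R.sched t = p ∧ ccStepCost R t ≠ 0 ∧
      (R.conf t).pc p = Loc.spin := by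
    intro t ht
    rw [hS1def, Finset.mem_filter, Finset.mem_Icc] at ht
    tauto
  have memS2 : ∀ t ∈ S2, i ≤ t ∧ t ≤ j ∧ R.sched t = p ∧ ccStepCost R t ≠ 0 ∧
      (R.conf t).pc p ≠ Loc.spin := by
    intro t ht
    rw [hS2def, Finset.mem_filter, Finset.mem_Icc] at ht
    tauto
  have cost2 : ∀ t, ccStepCost R t ≤ 2 := fun t =>
    AStep.cost_le_two (R.steps t) (ccCache R t)
  -- Key claim: of two costly spin steps, the later one exits the spin loop.
  have KC : ∀ t1 t2, t1 ∈ S1 → t2 ∈ S1 → t1 < t2 → (R.conf (t2 + 1)).pc p = Loc.crit := by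
    intro t1 t2 h1 h2 hlt
    obtain ⟨hi1, hj1, hs1, hc1, hspin1⟩ := memS1 t1 h1
    obtain ⟨hi2, hj2, hs2, hc2, hspin2⟩ := memS1 t2 h2
    have hstep1 : AStep n p (R.acc t1) (R.conf t1) (R.conf (t1 + 1)) := by
      have h := R.steps t1; rw [hs1] at h; exact h
    obtain ⟨q, f, hprev1, hacc1, hd1⟩ := AStep.spin_inv hstep1 hspin1
    rcases hd1 with ⟨hlk1, hcc⟩ | ⟨hlk1, hcrit1⟩
    swap
    · exfalso
      have hm := within (t1 + 1) t2 (by omega) (by omega) hj2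
      rw [hcrit1, hspin2] at hm
      simp [lord] at hm
    -- `p` stays at `spin` throughout `[t1, t2]`
    have hspin_all : ∀ u, t1 ≤ u → u ≤ t2 → (R.conf u).pc p = Loc.spin := by
      intro u hu1 hu2
      have ha := within t1 u hi1 hu1 (by omega)
      have hb := within u t2 (by omega) hu2 hj2
      rw [hspin1] at ha
      rw [hspin2] at hb
      exact lord_eq_spin (le_antisymm hb ha)
    -- `prev p` is constant on `[t1, t2]`
    have hprev_all : ∀ d, t1 + d ≤ t2 → (R.conf (t1 + d)).prev p = some (q, f) := by
      intro d
      induction d with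
      | zero => intro _; simpa using hprev1
      | succ d ih =>
        intro hle
        have h1 := ih (by omega)
        have h2 := AStep.prev_spin (R.steps (t1 + d))
          (hspin_all (t1 + d) (by omega) (by omega))
        have heq : t1 + (d + 1) = (t1 + d) + 1 := by omega
        rw [heq, h2, h1]
    -- after the read at `t1`, `p` caches `Lock[p][q]`
    have hr : ccCache R (t1 + 1) p (Reg.lockR p q) = true := by
      have hcc : ccCache R (t1 + 1)
          = ccApplyAccs (R.sched t1) (R.acc t1) (ccCache R t1) := rfl
      rw [hcc, hs1, hacc1]
      simp [ccApplyAccs, ccApplyAcc]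
    -- the invariant holds up to `t2`
    have hInv : ∀ d, t1 + 1 + d ≤ t2 →
        (ccCache R (t1 + 1 + d) p (Reg.lockR p q) = true ∨
          (R.conf (t1 + 1 + d)).lock p q = false) := by
      intro d
      induction d with
      | zero => intro _; left; simpa using hr
      | succ d ih =>
        intro hle
        have h1 := ih (by omega)
        have hsp := hspin_all (t1 + 1 + d) (by omega) (by omega)
        have h2 := AStep.spin_invariant (q := q) (ccCache R (t1 + 1 + d))
          (R.steps (t1 + 1 + d)) hsp h1
        have heq : t1 + 1 + (d + 1) = (t1 + 1 + d) + 1 := by omega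
        rw [heq]
        have hcc : ccCache R ((t1 + 1 + d) + 1)
            = ccApplyAccs (R.sched (t1 + 1 + d)) (R.acc (t1 + 1 + d))
              (ccCache R (t1 + 1 + d)) := rfl
        rw [hcc]
        exact h2
    have hIt2 := hInv (t2 - t1 - 1) (by omega)
    rw [show t1 + 1 + (t2 - t1 - 1) = t2 by omega] at hIt2
    -- the step at `t2`
    have hstep2 : AStep n p (R.acc t2) (R.conf t2) (R.conf (t2 + 1)) := by
      have h := R.steps t2; rw [hs2] at h; exact h
    obtain ⟨q2, f2, hprev2, hacc2, hd2⟩ := AStep.spin_inv hstep2 hspin2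
    have hq2 : q2 = q ∧ f2 = f := by
      have hp2 := hprev_all (t2 - t1) (by omega)
      rw [show t1 + (t2 - t1) = t2 by omega, hprev2] at hp2
      simpa using hp2
    obtain ⟨rfl, rfl⟩ := hq2
    -- the step at `t2` is costly, so the cached copy was invalidated
    have hcache2 : ccCache R t2 p (Reg.lockR p q2) = false := by
      by_contra hcc
      apply hc2
      have hcc' : ccCache R t2 p (Reg.lockR p q2) = true := by
        revert hcc; cases ccCache R t2 p (Reg.lockR p q2) <;> simp
      simp [ccStepCost, hs2, hacc2, ccAccCost, hcc']
    have hlock2 : (R.conf t2).lock p q2 = false := by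
      rcases hIt2 with h | h
      · rw [hcache2] at h; cases h
      · exact h
    rcases hd2 with ⟨hlk, _⟩ | ⟨_, hcrit⟩
    · rw [hlock2] at hlk; cases hlk
    · exact hcrit
  -- hence there are at most two costly spin steps
  have hS1card : S1.card ≤ 2 := by
    by_contra hgt
    push_neg at hgt
    have hne : S1.Nonempty := Finset.card_pos.mp (by omega)
    have hmS : S1.min' hne ∈ S1 := Finset.min'_mem _ _
    set m := S1.min' hne with hm
    have h2 : (S1.erase m).Nonempty := Finset.card_pos.mp
      (by rw [Finset.card_erase_of_mem hmS]; omega)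
    set m' := (S1.erase m).min' h2 with hm'
    have hm'S' : m' ∈ S1.erase m := Finset.min'_mem _ _
    have hm'S : m' ∈ S1 := Finset.mem_of_mem_erase hm'S'
    have hmm' : m < m' := lt_of_le_of_ne (Finset.min'_le _ _ hm'S)
      (Ne.symm (Finset.ne_of_mem_erase hm'S'))
    have h3 : ((S1.erase m).erase m').Nonempty := Finset.card_pos.mp
      (by rw [Finset.card_erase_of_mem hm'S', Finset.card_erase_of_mem hmS]; omega)
    obtain ⟨t3, ht3⟩ := h3
    have ht3S : t3 ∈ S1 := Finset.mem_of_mem_erase (Finset.mem_of_mem_erase ht3)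
    have hm't3 : m' < t3 := lt_of_le_of_ne (Finset.min'_le _ _ (Finset.mem_of_mem_erase ht3))
      (Ne.symm (Finset.ne_of_mem_erase ht3))
    have hcrit := KC m m' hmS hm'S hmm'
    obtain ⟨hi2, hj2, _, _, _⟩ := memS1 m' hm'S
    obtain ⟨hi3, hj3, _, _, hspin3⟩ := memS1 t3 ht3S
    have hmono := within (m' + 1) t3 (by omega) (by omega) hj3
    rw [hcrit, hspin3] at hmono
    simp [lord] at hmono
  -- at most one costly step at each non-spin location
  have hS2card : S2.card ≤ 7 := by
    have himg : ∀ t ∈ S2, (R.conf t).pc p ∈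
        ({Loc.entry1, Loc.entry2, Loc.lockPred, Loc.setSucc, Loc.checkDone,
          Loc.exit1, Loc.exit2} : Finset Loc) := by
      have hLoc : ∀ l : Loc, l ≠ Loc.idle → l ≠ Loc.trans → l ≠ Loc.crit →
          l ≠ Loc.spin →
          l ∈ ({Loc.entry1, Loc.entry2, Loc.lockPred, Loc.setSucc, Loc.checkDone,
            Loc.exit1, Loc.exit2} : Finset Loc) := by
        intro l
        cases l <;> simp
      intro t ht
      obtain ⟨_, _, hs, hc, hns⟩ := memS2 t ht
      have hstep : AStep n p (R.acc t) (R.conf t) (R.conf (t + 1)) := by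
        have h := R.steps t; rw [hs] at h; exact h
      have hane : R.acc t ≠ [] := by
        intro hA
        apply hc
        simp only [ccStepCost, hA, List.map_nil, List.sum_nil]
      obtain ⟨h1, h2, h3⟩ := AStep.cost_loc hstep hane
      exact hLoc _ h1 h2 h3 hns
    have hinj : Set.InjOn (fun t => (R.conf t).pc p) ↑S2 := by
      have key : ∀ a b, a ∈ S2 → b ∈ S2 → a < b →
          (R.conf a).pc p = (R.conf b).pc p → False := by
        intro a b ha hb hab hpc
        obtain ⟨hia, hja, hsa, hca, hnsa⟩ := memS2 a ha
        obtain ⟨hib, hjb, _, _, _⟩ := memS2 b hb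
        have hstep : AStep n p (R.acc a) (R.conf a) (R.conf (a + 1)) := by
          have h := R.steps a; rw [hsa] at h; exact h
        have hane : R.acc a ≠ [] := by
          intro hA; apply hca
          simp only [ccStepCost, hA, List.map_nil, List.sum_nil]
        obtain ⟨h1, h2, h3⟩ := AStep.cost_loc hstep hane
        have h5 : (R.conf (a + 1)).pc p ≠ Loc.idle := hni (a + 1) (by omega) (by omega)
        have hst := AStep.lord_lt hstep h2 h3 hnsa h5 h1
        have hmono := within (a + 1) b (by omega) (by omega) hjb
        rw [hpc] at hst
        omega
      intro t ht t' ht' heq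
      by_contra hne
      rcases Nat.lt_or_ge t t' with h | h
      · exact key t t' (Finset.mem_coe.mp ht) (Finset.mem_coe.mp ht') h heq
      · exact key t' t (Finset.mem_coe.mp ht') (Finset.mem_coe.mp ht) (by omega) heq.symm
    have := Finset.card_le_card_of_injOn _ himg hinj
    simpa using this
  refine ⟨?_, ?_⟩
  · -- total: at most 2 RMRs per costly step, at most 2 + 7 costly steps
    have hb1 : ∀ t ∈ Finset.Icc i j, (if R.sched t = p then ccStepCost R t else 0) ≤
        2 * ((if R.sched t = p ∧ ccStepCost R t ≠ 0 ∧ (R.conf t).pc p = Loc.spin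
                then 1 else 0) +
             (if R.sched t = p ∧ ccStepCost R t ≠ 0 ∧ (R.conf t).pc p ≠ Loc.spin
                then 1 else 0)) := by
      intro t _
      by_cases hs : R.sched t = p
      · by_cases hc : ccStepCost R t = 0
        · simp [hs, hc]
        · by_cases hl : (R.conf t).pc p = Loc.spin
          · have := cost2 t; simp [hs, hc, hl]; omega
          · have := cost2 t; simp [hs, hc, hl]; omega
      · simp [hs]
    calc (∑ t ∈ Finset.Icc i j, if R.sched t = p then ccStepCost R t else 0)
        ≤ ∑ t ∈ Finset.Icc i j,
            2 * ((if R.sched t = p ∧ ccStepCost R t ≠ 0 ∧ (R.conf t).pc p = Loc.spin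
                    then 1 else 0) +
                 (if R.sched t = p ∧ ccStepCost R t ≠ 0 ∧ (R.conf t).pc p ≠ Loc.spin
                    then 1 else 0)) := Finset.sum_le_sum hb1
      _ = 2 * (S1.card + S2.card) := by
          rw [← Finset.mul_sum, Finset.sum_add_distrib, hS1def, hS2def,
            Finset.card_filter, Finset.card_filter]
      _ ≤ 18 := by omega
  · -- the spin loop: each costly spin step costs exactly one RMR
    have hb2 : ∀ t ∈ Finset.Icc i j,
        (if R.sched t = p ∧ (R.conf t).pc p = Loc.spin then ccStepCost R t else 0) ≤
        (if R.sched t = p ∧ ccStepCost R t ≠ 0 ∧ (R.conf t).pc p = Loc.spin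
          then 1 else 0) := by
      intro t _
      by_cases hs : R.sched t = p
      · by_cases hl : (R.conf t).pc p = Loc.spin
        · by_cases hc : ccStepCost R t = 0
          · simp [hs, hl, hc]
          · have hstep : AStep n p (R.acc t) (R.conf t) (R.conf (t + 1)) :=
              by have h := R.steps t; rw [hs] at h; exact h
            obtain ⟨q, f, _, hacc, _⟩ := AStep.spin_inv hstep hl
            have hle : ccStepCost R t ≤ 1 := by
              simp only [ccStepCost, hs, hacc, List.map, List.sum_cons, List.sum_nil,
                ccAccCost]
              split_ifs <;> omega
            simp [hs, hl, hc]
            omega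
        · simp [hl]
      · simp [hs]
    calc (∑ t ∈ Finset.Icc i j,
            if R.sched t = p ∧ (R.conf t).pc p = Loc.spin then ccStepCost R t else 0)
        ≤ ∑ t ∈ Finset.Icc i j,
            (if R.sched t = p ∧ ccStepCost R t ≠ 0 ∧ (R.conf t).pc p = Loc.spin
              then 1 else 0) := Finset.sum_le_sum hb2
      _ = S1.card := by rw [hS1def, Finset.card_filter]
      _ ≤ 2 := hS1card
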